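/- For decorated trees T1, T2 and an integer i with 1 ≤ i ≤ fl(T1), the tree ⊕_T(T1, i, T2) obtained by identifying the roots of Δ_T(T1, i) and T2 (with subtrees of Δ_T(T1,i) placed to the left) is a decorated tree satisfying hd_T(⊕_T(T1,i,T2)) = T1, tl_T(⊕_T(T1,i,T2)) = T2, and fl(⊕_T(T1,i,T2)) = i + fl(T2). -/

import Mathlib

/-- Rooted plane trees with integer labels on the leaves. -/
inductive DTree where
  | leaf : ℤ → DTree
  | node : List DTree → DTree

mutual
/-- The list of leaf labels of a tree, in left-to-right (prefix traversal) order. -/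
def leafLabels : DTree → List ℤ
  | .leaf l => [l]
  | .node ts => leafLabelsList ts
def leafLabelsList : List DTree → List ℤ
  | [] => []
  | t :: ts => leafLabels t ++ leafLabelsList ts
end

/-- The three conditions of decorated trees, for a subtree whose root is at depth `d`:
leaf labels are at least -1 and strictly less than the depth of their parent;
every internal node of positive depth `d` has a descendant leaf labeled at most `d - 2`;
and in any direct subtree of an internal node of depth `d`, a leaf labeled `d` is
preceded in traversal order only by leaves labeled at least `d`. -/
inductive DecoAt : DTree → ℕ → Prop where
  | leaf {l : ℤ} {d : ℕ} (h1 : -1 ≤ l) (h2 : l < (d : ℤ) - 1) : DecoAt (.leaf l) d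
  | node {ts : List DTree} {d : ℕ} (hne : ts ≠ [])
      (h2 : 0 < d → ∃ x ∈ leafLabelsList ts, x ≤ (d : ℤ) - 2)
      (h3 : ∀ t' ∈ ts, ∀ a b, leafLabels t' = a ++ (d : ℤ) :: b → ∀ x ∈ a, (d : ℤ) ≤ x)
      (h4 : ∀ t' ∈ ts, DecoAt t' (d + 1)) : DecoAt (.node ts) d

/-- A decorated tree: the root is at depth 0. -/
def IsDeco (T : DTree) : Prop := DecoAt T 0

/-- The number of free leaves (leaves labeled -1). -/
def fl (T : DTree) : ℕ := (leafLabels T).count (-1)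

mutual
/-- Increment leaf labels, where the counter `m` is the number of free leaves (from
the left) that still must be incremented; once it reaches 0, remaining free leaves
are left untouched. Returns the new tree and the remaining counter. -/
def incUpTo : DTree → ℕ → DTree × ℕ
  | .leaf l, m =>
      if l = -1 then (if 0 < m then (.leaf 0, m - 1) else (.leaf (-1), m))
      else (.leaf (l + 1), m)
  | .node ts, m =>
      let p := incList ts m
      (.node p.1, p.2)
def incList : List DTree → ℕ → List DTree × ℕ
  | [], m => ([], m)
  | t :: ts, m =>
      let p := incUpTo t m
      let q := incList ts p.2
      (p.1 :: q.1, q.2)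
end

/-- Δ_T(T,i): attach `T` under a new root vertex and add 1 to every leaf label,
except for the last `i` free leaves (in traversal order). -/
def deltaT (T : DTree) (i : ℕ) : DTree := .node [(incUpTo T (fl T - i)).1]

mutual
/-- Subtract 1 from every non-free leaf label. -/
def decLeaves : DTree → DTree
  | .leaf l => if l = -1 then .leaf (-1) else .leaf (l - 1)
  | .node ts => .node (decList ts)
def decList : List DTree → List DTree
  | [] => []
  | t :: ts => decLeaves t :: decList ts
end

/-- Π_T: remove the root (which has a unique child) and subtract 1 from every
non-free leaf label. -/
def piT : DTree → DTree
  | .node [t] => decLeaves t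
  | t => t

/-- ⊕_T(T1,i,T2): identify the roots of Δ_T(T1,i) and T2, with the subtrees of
Δ_T(T1,i) placed to the left. -/
def oplusT (T1 : DTree) (i : ℕ) (T2 : DTree) : DTree :=
  match deltaT T1 i, T2 with
  | .node a, .node b => .node (a ++ b)
  | _, _ => deltaT T1 i

/-- hd_T: split off the leftmost direct subtree of the root and apply Π_T to it
(i.e. decrement its non-free leaf labels). -/
def hdT : DTree → DTree
  | .node (c :: _) => decLeaves c
  | t => t

/-- tl_T: the tree remaining after removing the leftmost direct subtree of the root. -/
def tlT : DTree → DTree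
  | .node (_ :: rest) => .node rest
  | t => t

/-! `Δ_T(T₁, i)` increments every label of `T₁` except its last `i` free leaves, so the leftmost
subtree of `⊕_T(T₁, i, T₂)` is `T₁` pushed one level down with its labels shifted by one.
Undoing the shift (`dec ∘ inc = id` on labels `≥ -1`) gives `hd_T`, the `i` untouched free leaves
give the count, and the decoration conditions of `T₁` shift along with its labels, the untouched
free leaves providing the low label that the new depth-`1` vertex needs. -/

def incLabel (l : ℤ) (m : ℕ) : ℤ × ℕ :=
  if l = -1 then (if 0 < m then (0, m - 1) else (-1, m)) else (l + 1, m)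

/-- The effect of `incUpTo` on the sequence of leaf labels. -/
def incLabels : List ℤ → ℕ → List ℤ × ℕ
  | [], m => ([], m)
  | l :: ls, m =>
      ((incLabel l m).1 :: (incLabels ls (incLabel l m).2).1, (incLabels ls (incLabel l m).2).2)

/-- Condition (3) of `DecoAt`, on a sequence of labels. -/
def GeBefore (d : ℤ) (L : List ℤ) : Prop := ∀ a b, L = a ++ d :: b → ∀ x ∈ a, d ≤ x

section Labels

variable {c d l : ℤ} {L : List ℤ}

theorem incLabels_append (L₁ L₂ : List ℤ) (m : ℕ) :
    incLabels (L₁ ++ L₂) m =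
      ((incLabels L₁ m).1 ++ (incLabels L₂ (incLabels L₁ m).2).1,
        (incLabels L₂ (incLabels L₁ m).2).2) := by
  induction L₁ generalizing m with
  | nil => rfl
  | cons l ls ih => simp only [List.cons_append, incLabels, ih]

theorem count_incLabels (hL : ∀ x ∈ L, -1 ≤ x) (m : ℕ) :
    (incLabels L m).1.count (-1) = L.count (-1) - m := by
  induction L generalizing m with
  | nil => simp [incLabels]
  | cons l ls ih =>
    have hl := hL l List.mem_cons_self
    have ih' := ih fun x hx => hL x (List.mem_cons_of_mem _ hx)
    rcases eq_or_ne l (-1) with rfl | hl₁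
    · by_cases hm : 0 < m <;>
        simp only [incLabels, incLabel, Int.reduceNeg, ↓reduceIte, hm, ne_eq, zero_eq_neg,
          one_ne_zero, not_false_eq_true, List.count_cons_of_ne, List.count_cons_self, ih'] <;>
        omega
    · simp [incLabels, incLabel, hl₁, ih', show l + 1 ≠ -1 by omega]

theorem exists_le_incLabels (hc : ∃ x ∈ L, x ≤ c) (m : ℕ) :
    ∃ y ∈ (incLabels L m).1, y ≤ c + 1 := by
  induction L generalizing m with
  | nil => simp at hc
  | cons l ls ih =>
    simp only [incLabels, List.mem_cons, exists_eq_or_imp]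
    obtain ⟨x, hx, hxc⟩ := hc
    rcases List.mem_cons.1 hx with rfl | hx
    · left; unfold incLabel; split_ifs <;> omega
    · exact Or.inr (ih ⟨x, hx, hxc⟩ _)

theorem sub_one_mem_of_mem_incLabels (hc : 0 < c) {m : ℕ} (h : c ∈ (incLabels L m).1) :
    c - 1 ∈ L := by
  induction L generalizing m with
  | nil => simp [incLabels] at h
  | cons l ls ih =>
    simp only [incLabels, List.mem_cons] at h ⊢
    rcases h with h | h
    · left; unfold incLabel at h; split_ifs at h <;> omega
    · exact Or.inr (ih h)

theorem zero_not_mem_incLabels_zero (hL : ∀ x ∈ L, -1 ≤ x) : (0 : ℤ) ∉ (incLabels L 0).1 := by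
  induction L with
  | nil => simp [incLabels]
  | cons l ls ih =>
    have hl := hL l List.mem_cons_self
    have hls := ih fun x hx => hL x (List.mem_cons_of_mem _ hx)
    rcases eq_or_ne l (-1) with rfl | hl₁
    · simp [incLabels, incLabel, hls]
    · simp only [incLabels, incLabel, Int.reduceNeg, hl₁, ↓reduceIte, List.mem_cons, hls, or_false]
      omega

theorem geBefore_nil : GeBefore d [] := by
  intro a b h
  simp at h

theorem geBefore_cons_iff : GeBefore d (l :: L) ↔ (d ∈ L → d ≤ l) ∧ GeBefore d L := by
  constructor
  · intro h
    refine ⟨fun hd => ?_, fun a b hab x hx => h (l :: a) b (by simp [hab]) x (by simp [hx])⟩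
    obtain ⟨a, b, rfl⟩ := List.append_of_mem hd
    exact h (l :: a) b rfl l List.mem_cons_self
  · rintro ⟨hl, hL⟩ (_ | ⟨a₀, a⟩) b hab x hx
    · simp at hx
    · simp only [List.cons_append, List.cons.injEq] at hab
      obtain ⟨rfl, rfl⟩ := hab
      rcases List.mem_cons.1 hx with rfl | hx
      · exact hl (by simp)
      · exact hL a b rfl x hx

/-- A positive label `d + 1` after incrementing can only come from a label `d`. -/
theorem geBefore_incLabels (hd : 0 ≤ d) (h : GeBefore d L) (m : ℕ) :
    GeBefore (d + 1) (incLabels L m).1 := by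
  induction L generalizing m with
  | nil => exact geBefore_nil
  | cons l ls ih =>
    rw [geBefore_cons_iff] at h
    refine geBefore_cons_iff.2 ⟨fun hmem => ?_, ih h.2 _⟩
    have hdl := h.1 (by simpa using sub_one_mem_of_mem_incLabels (by omega) hmem)
    unfold incLabel; split_ifs <;> omega

/-- A label `0` after incrementing comes from a free leaf met while the counter is positive,
hence before every free leaf that stays free. -/
theorem geBefore_zero_incLabels (hL : ∀ x ∈ L, -1 ≤ x) (m : ℕ) :
    GeBefore 0 (incLabels L m).1 := by
  induction L generalizing m with
  | nil => exact geBefore_nil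
  | cons l ls ih =>
    have hl := hL l List.mem_cons_self
    have hls : ∀ x ∈ ls, -1 ≤ x := fun x hx => hL x (List.mem_cons_of_mem _ hx)
    refine geBefore_cons_iff.2 ⟨fun hmem => ?_, ih hls _⟩
    unfold incLabel at hmem ⊢
    split_ifs at hmem ⊢ with h₁ h₂
    · exact le_rfl
    · exact absurd (by simpa [Nat.eq_zero_of_not_pos h₂] using hmem)
        (zero_not_mem_incLabels_zero hls)
    · omega

end Labels

theorem incUpTo_leaf (l : ℤ) (m : ℕ) :
    incUpTo (.leaf l) m = (.leaf (incLabel l m).1, (incLabel l m).2) := by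
  unfold incUpTo incLabel
  split_ifs <;> rfl

mutual
theorem incLabels_leafLabels : ∀ (T : DTree) (m : ℕ),
    incLabels (leafLabels T) m = (leafLabels (incUpTo T m).1, (incUpTo T m).2)
  | .leaf l, m => by rw [incUpTo_leaf]; rfl
  | .node ts, m => incLabels_leafLabelsList ts m
theorem incLabels_leafLabelsList : ∀ (ts : List DTree) (m : ℕ),
    incLabels (leafLabelsList ts) m = (leafLabelsList (incList ts m).1, (incList ts m).2)
  | [], m => rfl
  | t :: ts, m => by
      simp only [leafLabelsList, incLabels_append, incLabels_leafLabels t m,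
        incLabels_leafLabelsList ts, incList]
end

theorem leafLabels_incUpTo (T : DTree) (m : ℕ) :
    leafLabels (incUpTo T m).1 = (incLabels (leafLabels T) m).1 := by
  rw [incLabels_leafLabels]

theorem leafLabelsList_incList (ts : List DTree) (m : ℕ) :
    leafLabelsList (incList ts m).1 = (incLabels (leafLabelsList ts) m).1 := by
  rw [incLabels_leafLabelsList]

theorem mem_leafLabelsList {x : ℤ} {ts : List DTree} :
    x ∈ leafLabelsList ts ↔ ∃ t ∈ ts, x ∈ leafLabels t := by
  induction ts with
  | nil => simp [leafLabelsList]
  | cons t ts ih => simp [leafLabelsList, ih]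

mutual
theorem decLeaves_incUpTo : ∀ (T : DTree), (∀ x ∈ leafLabels T, -1 ≤ x) →
    ∀ m, decLeaves (incUpTo T m).1 = T
  | .leaf l, h, m => by
      have hl : -1 ≤ l := h l List.mem_cons_self
      rw [incUpTo_leaf]
      unfold incLabel decLeaves
      split_ifs <;> first | rfl | omega | simp_all
  | .node ts, h, m => congrArg DTree.node (decList_incList ts h m)
theorem decList_incList : ∀ (ts : List DTree), (∀ x ∈ leafLabelsList ts, -1 ≤ x) →
    ∀ m, decList (incList ts m).1 = ts
  | [], _, _ => rfl
  | t :: ts, h, m => by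
      simp only [leafLabelsList, List.forall_mem_append] at h
      simp only [incList, decList, decLeaves_incUpTo t h.1, decList_incList ts h.2]
end

theorem fl_incUpTo {T : DTree} (hT : ∀ x ∈ leafLabels T, -1 ≤ x) (m : ℕ) :
    fl (incUpTo T m).1 = fl T - m := by
  rw [fl, leafLabels_incUpTo, count_incLabels hT, fl]

theorem exists_of_mem_incList {t' : DTree} {ts : List DTree} {m : ℕ}
    (h : t' ∈ (incList ts m).1) : ∃ t ∈ ts, ∃ m', t' = (incUpTo t m').1 := by
  induction ts generalizing m with
  | nil => simp [incList] at h
  | cons t ts ih =>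
    simp only [incList, List.mem_cons] at h
    rcases h with rfl | h
    · exact ⟨t, List.mem_cons_self, m, rfl⟩
    · obtain ⟨u, hu, m', rfl⟩ := ih h
      exact ⟨u, List.mem_cons_of_mem _ hu, m', rfl⟩

theorem incList_fst_ne_nil {ts : List DTree} (h : ts ≠ []) (m : ℕ) : (incList ts m).1 ≠ [] := by
  cases ts with
  | nil => exact absurd rfl h
  | cons t ts => simp [incList]

theorem DecoAt.neg_one_le {T : DTree} {d : ℕ} (h : DecoAt T d) : ∀ x ∈ leafLabels T, -1 ≤ x := by
  induction h with
  | leaf h1 => simpa [leafLabels] using h1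
  | node _ _ _ _ ih =>
    intro x hx
    obtain ⟨t, ht, hx⟩ := mem_leafLabelsList.1 hx
    exact ih t ht x hx

theorem decoAt_node_incList {ts : List DTree} {d : ℕ} (m : ℕ) (hne : ts ≠ [])
    (hlow : ∃ x ∈ leafLabelsList (incList ts m).1, x ≤ (d : ℤ) - 1)
    (hge : ∀ t ∈ ts, GeBefore d (leafLabels t))
    (hsub : ∀ t ∈ ts, ∀ m', DecoAt (incUpTo t m').1 (d + 2)) :
    DecoAt (.node (incList ts m).1) (d + 1) := by
  refine .node (incList_fst_ne_nil hne m) (fun _ => ?_) (fun t' ht' => ?_) (fun t' ht' => ?_)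
  · rwa [Nat.cast_succ, show (d : ℤ) + 1 - 2 = d - 1 by ring]
  · obtain ⟨t, ht, m', rfl⟩ := exists_of_mem_incList ht'
    rw [leafLabels_incUpTo]
    push_cast
    exact geBefore_incLabels (by positivity) (hge t ht) m'
  · obtain ⟨t, ht, m', rfl⟩ := exists_of_mem_incList ht'
    exact hsub t ht m'

theorem DecoAt.incUpTo {T : DTree} {d : ℕ} (h : DecoAt T d) (hd : 0 < d) (m : ℕ) :
    DecoAt (incUpTo T m).1 (d + 1) := by
  induction h generalizing m with
  | @leaf l d h1 h2 =>
    rw [incUpTo_leaf]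
    unfold incLabel
    split_ifs <;> exact .leaf (by omega) (by push_cast; omega)
  | @node ts d hne h2 h3 h4 ih =>
    refine decoAt_node_incList m hne ?_ h3 fun t ht m' => ih t ht (by omega) m'
    obtain ⟨y, hy, hle⟩ := exists_le_incLabels (h2 hd) m
    exact ⟨y, by rwa [leafLabelsList_incList], by omega⟩

theorem IsDeco.exists_eq_node {T : DTree} (h : IsDeco T) : ∃ ts, T = .node ts := by
  cases h with
  | leaf h1 h2 => omega
  | node => exact ⟨_, rfl⟩

/-- The `fl T - m > 0` free leaves left untouched supply condition (2) at depth `1`. -/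
theorem IsDeco.decoAt_incUpTo {T : DTree} (h : IsDeco T) {m : ℕ} (hm : m < fl T) :
    DecoAt (incUpTo T m).1 1 := by
  have hfree : 0 < fl (incUpTo T m).1 := by rw [fl_incUpTo h.neg_one_le]; omega
  cases h with
  | leaf h1 h2 => omega
  | @node ts _ hne _ h3 h4 =>
    exact decoAt_node_incList m hne ⟨-1, List.count_pos_iff.1 hfree, by norm_num⟩ h3
      fun t ht m' => (h4 t ht).incUpTo one_pos m'

theorem isDeco_node_cons {A : DTree} {ts : List DTree} (hA : DecoAt A 1)
    (hA₀ : GeBefore 0 (leafLabels A)) (h : IsDeco (.node ts)) : IsDeco (.node (A :: ts)) := by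
  cases h with
  | node _ _ h3 h4 =>
    refine .node (List.cons_ne_nil _ _) (fun h => absurd h (lt_irrefl 0)) ?_ ?_ <;>
      rintro t (_ | ⟨_, ht⟩)
    exacts [hA₀, h3 t ht, hA, h4 t ht]

theorem oplusT_node (T₁ : DTree) (i : ℕ) (ts : List DTree) :
    oplusT T₁ i (.node ts) = .node ((incUpTo T₁ (fl T₁ - i)).1 :: ts) := rfl

theorem fl_node_cons (A : DTree) (ts : List DTree) : fl (.node (A :: ts)) = fl A + fl (.node ts) :=
  List.count_append ..

theorem stmt6 (T1 T2 : DTree) (i : ℕ) (h1 : IsDeco T1) (h2 : IsDeco T2)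
    (hi1 : 1 ≤ i) (hi2 : i ≤ fl T1) :
    IsDeco (oplusT T1 i T2) ∧ hdT (oplusT T1 i T2) = T1 ∧
      tlT (oplusT T1 i T2) = T2 ∧ fl (oplusT T1 i T2) = i + fl T2 := by
  obtain ⟨ts2, rfl⟩ := h2.exists_eq_node
  have hlb := h1.neg_one_le
  have hfl : fl (incUpTo T1 (fl T1 - i)).1 = i := by rw [fl_incUpTo hlb]; omega
  rw [oplusT_node]
  have hge : GeBefore 0 (leafLabels (incUpTo T1 (fl T1 - i)).1) := by
    rw [leafLabels_incUpTo]
    exact geBefore_zero_incLabels hlb _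
  exact ⟨isDeco_node_cons (h1.decoAt_incUpTo (by omega)) hge h2, decLeaves_incUpTo T1 hlb _, rfl,
    by rw [fl_node_cons, hfl]⟩
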